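/- arXiv:1706.08599 — 9 statements merged into one kernel-verified Lean document; each statement's English description precedes it below -/
import Mathlib

section
/- The Two-Stage Luce model can violate regularity: there exist an attractiveness function, a threshold, and two nested assortments S ⊂ T such that the probability of choosing a fixed product under the Threshold Luce model is strictly larger on the bigger set T than on S. Concretely, with products {1,2,3,4}, attractiveness a₁=5, a₂=4, a₃=3, a₄=3, outside option a₀=1, and threshold t=0.4, the choice probability of product 2 from {2,3,4} is 4/11, while from {1,2,3,4} it is 4/10, and 4/10 > 4/11. -/
/-!
Adding product 1 (attractiveness 5) to `{2, 3, 4}` pushes products 3 and 4 out of the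
consideration set, since `5 > 1.4 · 3`, while product 2 survives, since `5 ≤ 1.4 · 4`.
The denominator for product 2 thus drops from `4 + 3 + 3 + 1 = 11` to `5 + 4 + 1 = 10`.
-/

namespace ThresholdLuce

variable {n : ℕ} (a : Fin n → ℝ) (a0 t : ℝ)

/- Indexing by `Fin n` makes `∃ x ∈ A, …` decidable through `Nat.decidableExistsFin`, as in
the theorem's `let`-bound `c`, so `consideration` and `choiceProb` unfold definitionally to
its `c` and `ρ`. -/
noncomputable def consideration (A : Finset (Fin n)) : Finset (Fin n) :=
  A.filter fun y => ¬ ∃ x ∈ A, a x > (1 + t) * a y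

noncomputable def choiceProb (x : Fin n) (A : Finset (Fin n)) : ℝ :=
  if x ∈ consideration a t A then a x / ((∑ y ∈ consideration a t A, a y) + a0) else 0

variable {a t}

theorem mem_consideration {A : Finset (Fin n)} {y : Fin n} :
    y ∈ consideration a t A ↔ y ∈ A ∧ ∀ x ∈ A, a x ≤ (1 + t) * a y := by
  simp [consideration]

theorem consideration_eq_self {A : Finset (Fin n)}
    (h : ∀ x ∈ A, ∀ y ∈ A, a x ≤ (1 + t) * a y) : consideration a t A = A :=
  Finset.filter_true_of_mem fun y hy ⟨x, hx, hxy⟩ => (h x hx y hy).not_gt hxy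

theorem choiceProb_of_mem {A : Finset (Fin n)} {x : Fin n} (hx : x ∈ consideration a t A) :
    choiceProb a a0 t x A = a x / ((∑ y ∈ consideration a t A, a y) + a0) :=
  if_pos hx

end ThresholdLuce

open ThresholdLuce

theorem consideration_example_S :
    consideration ![(5 : ℝ), 4, 3, 3] 0.4 {1, 2, 3} = {1, 2, 3} := by
  apply consideration_eq_self
  simp only [Finset.mem_insert, Finset.mem_singleton]
  rintro x (rfl | rfl | rfl) y (rfl | rfl | rfl) <;> simp <;> norm_num

theorem consideration_example_T :
    consideration ![(5 : ℝ), 4, 3, 3] 0.4 {0, 1, 2, 3} = {0, 1} := by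
  ext y
  simp only [mem_consideration]
  fin_cases y <;> simp <;> norm_num

theorem choiceProb_example_S : choiceProb ![5, 4, 3, 3] 1 0.4 1 {1, 2, 3} = 4 / 11 := by
  rw [choiceProb_of_mem _ (by simp [consideration_example_S]), consideration_example_S,
    Finset.sum_insert (by decide), Finset.sum_pair (by decide)]
  simp only [Matrix.cons_val_one, Matrix.cons_val_zero, Matrix.cons_val]
  norm_num

theorem choiceProb_example_T : choiceProb ![5, 4, 3, 3] 1 0.4 1 {0, 1, 2, 3} = 4 / 10 := by
  rw [choiceProb_of_mem _ (by simp [consideration_example_T]), consideration_example_T]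
  norm_num

/-- The Two-Stage Luce model can violate regularity: with products `{1,2,3,4}` having
attractiveness `5,4,3,3`, outside option `1` and threshold `0.4`, the probability of
choosing product 2 (index `1`) from `{2,3,4}` is `4/11`, while from `{1,2,3,4}` it is
`4/10 > 4/11`. -/
theorem twoStageLuce_regularity_violation :
    ∃ (a : Fin 4 → ℝ) (a0 t : ℝ) (S T : Finset (Fin 4)),
      (∀ i, 0 < a i) ∧ 0 < a0 ∧ 0 < t ∧ S ⊂ T ∧
      a 0 = 5 ∧ a 1 = 4 ∧ a 2 = 3 ∧ a 3 = 3 ∧ a0 = 1 ∧ t = 0.4 ∧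
      S = {1, 2, 3} ∧ T = {0, 1, 2, 3} ∧
      (let c : Finset (Fin 4) → Finset (Fin 4) := fun A =>
        A.filter (fun y => ¬ ∃ x ∈ A, a x > (1 + t) * a y)
       let ρ : Fin 4 → Finset (Fin 4) → ℝ := fun x A =>
        if x ∈ c A then a x / ((∑ y ∈ c A, a y) + a0) else 0
       ρ 1 S = 4 / 11 ∧ ρ 1 T = 4 / 10 ∧ ρ 1 S < ρ 1 T) := by
  have hpos : ∀ i, 0 < (![5, 4, 3, 3] : Fin 4 → ℝ) i := by
    intro i
    fin_cases i <;> norm_num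
  have hlt : choiceProb ![5, 4, 3, 3] 1 0.4 1 {1, 2, 3} <
      choiceProb ![5, 4, 3, 3] 1 0.4 1 {0, 1, 2, 3} := by
    rw [choiceProb_example_S, choiceProb_example_T]
    norm_num
  exact ⟨![5, 4, 3, 3], 1, 0.4, {1, 2, 3}, {0, 1, 2, 3}, hpos, one_pos, by norm_num,
    Finset.ssubset_insert (by decide), rfl, rfl, rfl, rfl, rfl, rfl, rfl, rfl,
    choiceProb_example_S, choiceProb_example_T, hlt⟩
end

section
/- Revenue-ordered assortments are not optimal under the Two-Stage Luce model: with products X = {1,2,3}, revenues r₁=88, r₂=47, r₃=46, attractiveness a₀=55, a₁=13, a₂=26, a₃=15, and dominance 2 ≻ 1, 2 ≻ 3, the expected revenue of assortment {1,3} is strictly greater than the expected revenue of each of {1}, {2}, {3}, and in particular strictly greater than every revenue-ordered assortment. -/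
open Classical

/-- Revenue-ordered assortments are not optimal under the 2SLM: with revenues
`88,47,46`, attractiveness `13,26,15`, outside option `55`, and dominance
`2 ≻ 1`, `2 ≻ 3` (indices `1 ≻ 0` and `1 ≻ 2`), the assortment `{1,3}` (indices `{0,2}`)
beats `{1}`, `{2}`, `{3}` and every revenue-ordered assortment. -/
theorem revenue_ordered_not_optimal_2SLM :
    let r : Fin 3 → ℝ := ![88, 47, 46]
    let a : Fin 3 → ℝ := ![13, 26, 15]
    let a0 : ℝ := 55
    let dom : Fin 3 → Fin 3 → Prop := fun x y => x = 1 ∧ y ≠ 1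
    let c : Finset (Fin 3) → Finset (Fin 3) := fun S =>
      S.filter (fun y => ¬ ∃ x ∈ S, dom x y)
    let R : Finset (Fin 3) → ℝ := fun S =>
      (∑ i ∈ c S, r i * a i) / ((∑ i ∈ c S, a i) + a0)
    R {0} < R {0, 2} ∧ R {1} < R {0, 2} ∧ R {2} < R {0, 2} ∧
      ∀ ρ : ℝ, R (Finset.univ.filter (fun i => ρ ≤ r i)) < R {0, 2} := by
  intro r a a0 dom c R
  have h02 : c {0,2} = {0,2} := by ext i; fin_cases i <;> simp [c, dom]
  have h0 : c {0} = {0} := by ext i; fin_cases i <;> simp [c, dom]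
  have h1 : c {1} = {1} := by ext i; fin_cases i <;> simp [c, dom]
  have h2 : c {2} = {2} := by ext i; fin_cases i <;> simp [c, dom]
  have h01 : c {0,1} = {1} := by ext i; fin_cases i <;> simp [c, dom]
  have h012 : c {0,1,2} = {1} := by ext i; fin_cases i <;> simp [c, dom]
  have hE : c ∅ = ∅ := by simp [c]
  have v02 : R {0,2} = 1834/83 := by
    simp [R, h02, Finset.sum_pair (by decide : (0:Fin 3) ≠ 2), r, a]
    norm_num
  have v0 : R {0} = 1144/68 := by
    simp [R, h0, r, a]; norm_num
  have v1 : R {1} = 1222/81 := by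
    simp [R, h1, r, a]; norm_num
  have v2 : R {2} = 690/70 := by
    simp [R, h2, r, a]; norm_num
  refine ⟨by rw [v0, v02]; norm_num, by rw [v1, v02]; norm_num,
    by rw [v2, v02]; norm_num, ?_⟩
  intro ρ
  rcases le_or_gt ρ 46 with hρ | hρ
  · have : Finset.univ.filter (fun i => ρ ≤ r i) = {0,1,2} := by
      ext i; fin_cases i <;> simp [r] <;> linarith
    rw [this]
    have : R {0,1,2} = 1222/81 := by simp [R, h012, r, a]; norm_num
    rw [this, v02]; norm_num
  rcases le_or_gt ρ 47 with hρ' | hρ'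
  · have : Finset.univ.filter (fun i => ρ ≤ r i) = {0,1} := by
      ext i; fin_cases i <;> simp [r] <;> linarith
    rw [this]
    have : R {0,1} = 1222/81 := by simp [R, h01, r, a]; norm_num
    rw [this, v02]; norm_num
  rcases le_or_gt ρ 88 with hρ'' | hρ''
  · have : Finset.univ.filter (fun i => ρ ≤ r i) = {0} := by
      ext i; fin_cases i <;> simp [r] <;> linarith
    rw [this, v0, v02]; norm_num
  · have : Finset.univ.filter (fun i => ρ ≤ r i) = ∅ := by
      ext i; fin_cases i <;> simp [r] <;> linarith
    rw [this]
    have : R ∅ = 0 := by simp [R, hE]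
    rw [this, v02]; norm_num
end

section
/- Revenue-ordered assortments can be arbitrarily bad under the Threshold Luce model: consider N+1 products where product 1 has price p₁ > 0 and attractiveness a₁ > 0, products 2,…,N+1 each have price α·p₁ (0 < α < 1) and attractiveness γ·a₁ (γ > 0), the outside option has attractiveness a₀ > 0, and product 1 dominates all other products. Then the ratio of the revenue R' = p₁·a₁/(a₁+a₀) of assortment {1} to the revenue R*_N = (N·α·p₁·γ·a₁)/(N·α·γ·a₁ + a₀) of the assortment of the other N products converges, as N → ∞, to a₁/(a₁+a₀), which is strictly less than 1 and can be made arbitrarily small by increasing a₀. -/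
open Filter Topology

/-!
Offering `N` identical products of price `q` under the multinomial logit model earns
`N q w / (N w + a₀)`, which tends to `q` because the outside option's share vanishes. Hence the
revenue of the dominated products tends to `p₁`, and the ratio tends to `a₁ / (a₁ + a₀)`.
-/

theorem tendsto_natCast_mul_mul_div_natCast_mul_add (q w d : ℝ) (hw : w ≠ 0) :
    Tendsto (fun N : ℕ => N * q * w / (N * w + d)) atTop (𝓝 q) := by
  have key : ∀ N : ℕ, q * (N / (N + d / w)) = N * q * w / (N * w + d) := fun N =>
    calc q * (N / (N + d / w)) = q * N * w / ((N + d / w) * w) := by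
          rw [mul_div_mul_right _ _ hw, mul_div_assoc]
      _ = N * q * w / (N * w + d) := by rw [add_mul, div_mul_cancel₀ _ hw]; ring
  simpa only [key, mul_one] using (tendsto_natCast_div_add_atTop (d / w)).const_mul q

theorem exists_pos_div_add_lt (a : ℝ) {ε : ℝ} (hε : 0 < ε) : ∃ b : ℝ, 0 < b ∧ a / (a + b) < ε := by
  have h : Tendsto (fun b : ℝ => a / (a + b)) atTop (𝓝 0) :=
    tendsto_const_nhds.div_atTop (tendsto_atTop_add_const_left _ a tendsto_id)
  exact ((eventually_gt_atTop 0).and (h.eventually (gt_mem_nhds hε))).exists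

theorem revenue_ordered_arbitrarily_bad_general (p1 a1 a0 α γ : ℝ)
    (hp1 : 0 < p1) (ha1 : 0 < a1) (ha0 : 0 < a0)
    (hα0 : 0 < α) (hγ : 0 < γ) :
    Tendsto (fun N : ℕ =>
        (p1 * a1 / (a1 + a0)) /
          ((N * α * p1 * γ * a1) / (N * α * γ * a1 + a0)))
      atTop (nhds (a1 / (a1 + a0))) ∧
    a1 / (a1 + a0) < 1 ∧
    ∀ ε : ℝ, 0 < ε → ∃ b : ℝ, 0 < b ∧ a1 / (a1 + b) < ε := by
  have hdominated : Tendsto (fun N : ℕ => (N * α * p1 * γ * a1) / (N * α * γ * a1 + a0))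
      atTop (𝓝 p1) :=
    (tendsto_natCast_mul_mul_div_natCast_mul_add p1 (α * γ * a1) a0 (by positivity)).congr
      fun N => by ring
  refine ⟨?_, (div_lt_one (by linarith)).2 (by linarith), fun ε hε => exists_pos_div_add_lt a1 hε⟩
  rw [← mul_div_cancel_left₀ (a1 / (a1 + a0)) hp1.ne', ← mul_div_assoc]
  exact tendsto_const_nhds.div hdominated hp1.ne'

/-- Revenue-ordered assortments can be arbitrarily bad under the Threshold Luce model:
the ratio of the revenue of `{1}` to the revenue of the `N` dominated products tends to
`a₁/(a₁+a₀) < 1` as `N → ∞`, a quantity that can be made arbitrarily small by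
increasing `a₀`. -/
theorem revenue_ordered_arbitrarily_bad (p1 a1 a0 α γ : ℝ)
    (hp1 : 0 < p1) (ha1 : 0 < a1) (ha0 : 0 < a0)
    (hα0 : 0 < α) (hα1 : α < 1) (hγ : 0 < γ) :
    Tendsto (fun N : ℕ =>
        (p1 * a1 / (a1 + a0)) /
          ((N * α * p1 * γ * a1) / (N * α * γ * a1 + a0)))
      atTop (nhds (a1 / (a1 + a0))) ∧
    a1 / (a1 + a0) < 1 ∧
    ∀ ε : ℝ, 0 < ε → ∃ b : ℝ, 0 < b ∧ a1 / (a1 + b) < ε :=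
  revenue_ordered_arbitrarily_bad_general p1 a1 a0 α γ hp1 ha1 ha0 hα0 hγ
end

section
/- In any optimal solution (S*, p*) of the joint assortment and pricing problem under the Threshold Luce model, every offered product has price at least the optimal revenue: p*_i ≥ R* for all i ∈ S*, where R* = R(S*, p*). Equivalently: if S is an assortment with prices p, consideration set equal to S, and some i ∈ S has p_i < R(S, p), then R(S \ {i}, p) > R(S, p). -/
/-- In any optimal solution of the joint assortment and pricing problem under the
Threshold Luce model every offered product has price at least the optimal revenue;
equivalently, if some product in a valid assortment has price below the revenue,
removing it strictly increases the revenue. -/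
theorem price_at_least_revenue {n : ℕ} (u p : Fin n → ℝ) (a0 t : ℝ)
    (ha0 : 0 < a0) (ht : 0 < t) (S : Finset (Fin n))
    (hvalid : ∀ j ∈ S, ∀ i ∈ S,
      Real.exp (u i - p i) ≤ (1 + t) * Real.exp (u j - p j)) :
    let R : Finset (Fin n) → ℝ := fun A =>
      (∑ k ∈ A, p k * Real.exp (u k - p k)) /
        ((∑ k ∈ A, Real.exp (u k - p k)) + a0)
    ∀ i ∈ S, p i < R S → R S < R (S.erase i) := by
  intro R i hi hp
  set w : Fin n → ℝ := fun k => Real.exp (u k - p k) with hw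
  have hwi : 0 < w i := Real.exp_pos _
  have hN : ∑ k ∈ S.erase i, p k * w k = (∑ k ∈ S, p k * w k) - p i * w i :=
    Finset.sum_erase_eq_sub hi
  have hD : ∑ k ∈ S.erase i, w k = (∑ k ∈ S, w k) - w i :=
    Finset.sum_erase_eq_sub hi
  have hsum : (0:ℝ) ≤ ∑ k ∈ S.erase i, w k :=
    Finset.sum_nonneg fun k _ => (Real.exp_pos _).le
  have hDpos : 0 < (∑ k ∈ S, w k) + a0 := by
    have : (∑ k ∈ S, w k) = (∑ k ∈ S.erase i, w k) + w i := by linarith [hD]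
    nlinarith
  have hD'pos : 0 < (∑ k ∈ S.erase i, w k) + a0 := by linarith
  have hp' : p i * ((∑ k ∈ S, w k) + a0) < ∑ k ∈ S, p k * w k := by
    have := (lt_div_iff₀ hDpos).mp hp
    linarith
  show (∑ k ∈ S, p k * w k) / ((∑ k ∈ S, w k) + a0) <
      (∑ k ∈ S.erase i, p k * w k) / ((∑ k ∈ S.erase i, w k) + a0)
  rw [div_lt_div_iff₀ hDpos hD'pos, hN, hD]
  nlinarith
end

section
/- Swapping a lower-utility offered product for a higher-utility unoffered product at a matched attractiveness strictly increases revenue: suppose (S, p) is valid, j ∈ S, i ∉ S, and u_i > u_j. Let Ŝ = (S \ {j}) ∪ {i} and p̂_i = u_i − u_j + p_j (keeping all other prices). Then exp(u_i − p̂_i) = exp(u_j − p_j), p̂_i > p_j, and R(Ŝ, p̂) = R(S, p) + (exp(u_j − p_j)/(Σ_{k∈Ŝ} exp(u_k − p̂_k) + a₀))·(p̂_i − p_j) > R(S, p). Consequently, some optimal assortment is an intrinsic-utility-ordered set [k] = {1,…,k}. -/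
/-- A strictly monotone map `Fin k → ℕ` satisfies `m ≤ φ m`. -/
lemma aux_strictMono_le {k : ℕ} (φ : Fin k → ℕ) (h : StrictMono φ) :
    ∀ m : Fin k, (m : ℕ) ≤ φ m := by
  have key : ∀ d : ℕ, ∀ m : Fin k, (m : ℕ) = d → d ≤ φ m := by
    intro d
    induction d with
    | zero => intro m _; exact Nat.zero_le _
    | succ d ih =>
      intro m hm
      have hd : d < k := lt_of_le_of_lt (by omega) m.2
      have h1 : d ≤ φ ⟨d, hd⟩ := ih ⟨d, hd⟩ rfl
      have h2 : φ ⟨d, hd⟩ < φ m := h (by simp [Fin.lt_def, hm])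
      omega
  intro m; exact key _ m rfl

/-- Swapping a lower-utility offered product `j` for a higher-utility unoffered
product `i` at the matched price `p2ᵢ = uᵢ − uⱼ + pⱼ` keeps the attractiveness and
strictly increases revenue; consequently, from any optimal solution one obtains an
optimal solution whose assortment is an intrinsic-utility-ordered set `[k]`. -/
theorem swap_increases_revenue_and_utility_ordered_optimal {n : ℕ}
    (u : Fin n → ℝ) (a0 t : ℝ) (ha0 : 0 < a0) (ht : 0 < t)
    (hsort : ∀ i j : Fin n, i ≤ j → u j ≤ u i) :
    let R : Finset (Fin n) → (Fin n → ℝ) → ℝ := fun A q =>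
      (∑ k ∈ A, q k * Real.exp (u k - q k)) /
        ((∑ k ∈ A, Real.exp (u k - q k)) + a0)
    let valid : Finset (Fin n) → (Fin n → ℝ) → Prop := fun A q =>
      ∀ j ∈ A, ∀ i ∈ A, Real.exp (u i - q i) ≤ (1 + t) * Real.exp (u j - q j)
    (∀ (S : Finset (Fin n)) (p : Fin n → ℝ) (j : Fin n), j ∈ S →
      ∀ i : Fin n, i ∉ S → u j < u i → valid S p →
        let S2 := insert i (S.erase j)
        let p2 := Function.update p i (u i - u j + p j)
        Real.exp (u i - p2 i) = Real.exp (u j - p j) ∧ p j < p2 i ∧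
        R S2 p2 = R S p +
          (Real.exp (u j - p j) / ((∑ k ∈ S2, Real.exp (u k - p2 k)) + a0)) *
            (p2 i - p j) ∧
        R S p < R S2 p2) ∧
    (∀ (Sstar : Finset (Fin n)) (pstar : Fin n → ℝ), valid Sstar pstar →
      (∀ S q, valid S q → R S q ≤ R Sstar pstar) →
      ∃ (k : ℕ) (S' : Finset (Fin n)) (p' : Fin n → ℝ),
        S' = Finset.univ.filter (fun i : Fin n => (i : ℕ) < k) ∧ valid S' p' ∧
        R S' p' = R Sstar pstar ∧ ∀ S q, valid S q → R S q ≤ R S' p') := by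
  intro R valid
  have hsum_pos : ∀ (A : Finset (Fin n)) (q : Fin n → ℝ),
      0 < (∑ k ∈ A, Real.exp (u k - q k)) + a0 := by
    intro A q
    have : 0 ≤ ∑ k ∈ A, Real.exp (u k - q k) :=
      Finset.sum_nonneg fun k _ => (Real.exp_pos _).le
    linarith
  constructor
  · -- part 1: the swap
    intro S p j hj i hi hu hval
    intro S2 p2
    have hiS : i ∉ S.erase j := fun h => hi (Finset.mem_of_mem_erase h)
    have hp2i : p2 i = u i - u j + p j := Function.update_self i _ p
    have hexp : Real.exp (u i - p2 i) = Real.exp (u j - p j) := by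
      rw [hp2i]; congr 1; ring
    have hlt : p j < p2 i := by rw [hp2i]; linarith
    have hp2k : ∀ k ∈ S.erase j, p2 k = p k := by
      intro k hk
      have : k ≠ i := fun h => hi (h ▸ Finset.mem_of_mem_erase hk)
      exact Function.update_of_ne this _ p
    have hsum : ∑ k ∈ S2, Real.exp (u k - p2 k) = ∑ k ∈ S, Real.exp (u k - p k) := by
      rw [show S2 = insert i (S.erase j) from rfl, Finset.sum_insert hiS, hexp,
        ← Finset.add_sum_erase S _ hj]
      congr 1
      exact Finset.sum_congr rfl fun k hk => by rw [hp2k k hk]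
    have hnum : ∑ k ∈ S2, p2 k * Real.exp (u k - p2 k)
        = (∑ k ∈ S, p k * Real.exp (u k - p k)) + (p2 i - p j) * Real.exp (u j - p j) := by
      rw [show S2 = insert i (S.erase j) from rfl, Finset.sum_insert hiS, hexp,
        ← Finset.add_sum_erase S _ hj]
      have h2 : ∑ k ∈ S.erase j, p2 k * Real.exp (u k - p2 k)
          = ∑ k ∈ S.erase j, p k * Real.exp (u k - p k) :=
        Finset.sum_congr rfl fun k hk => by rw [hp2k k hk]
      rw [h2]; ring
    have hD := hsum_pos S p
    have hR2 : R S2 p2 = R S p +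
        (Real.exp (u j - p j) / ((∑ k ∈ S2, Real.exp (u k - p2 k)) + a0)) * (p2 i - p j) := by
      show (∑ k ∈ S2, p2 k * Real.exp (u k - p2 k)) / ((∑ k ∈ S2, Real.exp (u k - p2 k)) + a0)
        = (∑ k ∈ S, p k * Real.exp (u k - p k)) / ((∑ k ∈ S, Real.exp (u k - p k)) + a0) + _
      rw [hnum, hsum]
      field_simp
    refine ⟨hexp, hlt, hR2, ?_⟩
    rw [hR2]
    have hpos : 0 < (Real.exp (u j - p j) / ((∑ k ∈ S2, Real.exp (u k - p2 k)) + a0))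
        * (p2 i - p j) := by
      apply mul_pos
      · exact div_pos (Real.exp_pos _) (hsum_pos S2 p2)
      · linarith
    linarith
  · -- part 2: utility-ordered optimal assortment
    intro Sstar pstar hvalid hopt
    set k := Sstar.card with hkdef
    have hk : k ≤ n := by
      simpa using Finset.card_le_card (Finset.subset_univ Sstar)
    let f : Fin k → Fin n := fun m => ((Sstar.orderIsoOfFin rfl) m : Fin n)
    have hf_mem : ∀ m, f m ∈ Sstar := fun m => ((Sstar.orderIsoOfFin rfl) m).2
    have hf_mono : StrictMono f := fun a b hab => by
      exact (Sstar.orderIsoOfFin rfl).strictMono hab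
    have hle : ∀ m : Fin k, (m : ℕ) ≤ (f m : ℕ) := by
      apply aux_strictMono_le
      exact fun a b hab => hf_mono hab
    let g : Fin k → Fin n := fun m => ⟨m, lt_of_lt_of_le m.2 hk⟩
    let p' : Fin n → ℝ := fun x =>
      if hx : (x : ℕ) < k then u x - u (f ⟨x, hx⟩) + pstar (f ⟨x, hx⟩) else pstar x
    set S' : Finset (Fin n) := Finset.univ.filter (fun i : Fin n => (i : ℕ) < k) with hS'
    have hkey : ∀ (x : Fin n) (hx : (x : ℕ) < k),
        u x - p' x = u (f ⟨x, hx⟩) - pstar (f ⟨x, hx⟩) := by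
      intro x hx
      show u x - (if hx' : (x : ℕ) < k then _ else _) = _
      rw [dif_pos hx]; ring
    -- identify S' and Sstar as images
    have hg_inj : Function.Injective g := by
      intro a b hab
      have h2 : (g a : Fin n).val = (g b : Fin n).val := congrArg Fin.val hab
      exact Fin.ext h2
    have hf_inj : Function.Injective f := hf_mono.injective
    have hS'_img : S' = Finset.univ.image g := by
      apply Finset.Subset.antisymm
      · intro x hx
        have hxk : (x : ℕ) < k := (Finset.mem_filter.mp hx).2
        refine Finset.mem_image.mpr ⟨⟨(x : ℕ), hxk⟩, Finset.mem_univ _, ?_⟩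
        rfl
      · intro x hx
        obtain ⟨m, _, rfl⟩ := Finset.mem_image.mp hx
        simp [hS', g, m.2]
    have hSstar_img : Sstar = Finset.univ.image f := by
      symm
      apply Finset.eq_of_subset_of_card_le
      · intro x hx
        obtain ⟨m, _, rfl⟩ := Finset.mem_image.mp hx
        exact hf_mem m
      · rw [Finset.card_image_of_injective _ hf_inj, Finset.card_univ, Fintype.card_fin]
    have hsum_g : ∀ F : Fin n → ℝ, ∑ x ∈ S', F x = ∑ m : Fin k, F (g m) := by
      intro F
      rw [hS'_img, Finset.sum_image (fun a _ b _ h => hg_inj h)]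
    have hsum_f : ∀ F : Fin n → ℝ, ∑ x ∈ Sstar, F x = ∑ m : Fin k, F (f m) := by
      intro F
      rw [hSstar_img, Finset.sum_image (fun a _ b _ h => hf_inj h)]
    -- attractiveness at g m matches that at f m
    have hmatch : ∀ m : Fin k, u (g m) - p' (g m) = u (f m) - pstar (f m) :=
      fun m => hkey (g m) m.2
    -- denominator sums equal
    have hden : ∑ x ∈ S', Real.exp (u x - p' x) = ∑ x ∈ Sstar, Real.exp (u x - pstar x) := by
      rw [hsum_g, hsum_f]
      exact Finset.sum_congr rfl fun m _ => by rw [hmatch m]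
    -- validity of (S', p')
    have hvalid' : valid S' p' := by
      intro j hj i hi
      have hjk : (j : ℕ) < k := (Finset.mem_filter.mp hj).2
      have hik : (i : ℕ) < k := (Finset.mem_filter.mp hi).2
      rw [hkey j hjk, hkey i hik]
      exact hvalid _ (hf_mem _) _ (hf_mem _)
    -- numerator inequality
    have hnum_le : ∑ x ∈ Sstar, pstar x * Real.exp (u x - pstar x)
        ≤ ∑ x ∈ S', p' x * Real.exp (u x - p' x) := by
      rw [hsum_g, hsum_f]
      apply Finset.sum_le_sum
      intro m _
      have hgm : ((g m : Fin n) : ℕ) < k := m.2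
      have hp'gm : p' (g m) = u (g m) - u (f m) + pstar (f m) := by
        show (if hx : ((g m : Fin n) : ℕ) < k then
            u (g m) - u (f ⟨((g m : Fin n) : ℕ), hx⟩) + pstar (f ⟨((g m : Fin n) : ℕ), hx⟩)
          else pstar (g m)) = _
        rw [dif_pos hgm]
      rw [hmatch m, hp'gm]
      have hu_le : u (f m) ≤ u (g m) := by
        apply hsort
        exact Fin.mk_le_mk.mpr (hle m)
      have hepos : 0 < Real.exp (u (f m) - pstar (f m)) := Real.exp_pos _
      nlinarith
    -- revenue comparison
    have hRle : R Sstar pstar ≤ R S' p' := by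
      show (∑ x ∈ Sstar, pstar x * Real.exp (u x - pstar x)) /
          ((∑ x ∈ Sstar, Real.exp (u x - pstar x)) + a0)
        ≤ (∑ x ∈ S', p' x * Real.exp (u x - p' x)) /
          ((∑ x ∈ S', Real.exp (u x - p' x)) + a0)
      rw [hden]
      exact div_le_div_of_nonneg_right hnum_le (hsum_pos Sstar pstar).le
    have hReq : R S' p' = R Sstar pstar :=
      le_antisymm (hopt S' p' hvalid') hRle
    exact ⟨k, S', p', rfl, hvalid', hReq, fun S q hq => (hopt S q hq).trans hReq.ge⟩
end

section
/- At an optimal solution of the joint assortment and pricing problem under the Threshold Luce model, prices are nonincreasing in the product index: p*_i ≥ p*_{i+1} for all offered products (indexed by decreasing intrinsic utility). Moreover, if two offered products have equal intrinsic utilities, then they have equal optimal prices. -/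
/-!
Pooling two offered products `i, j` with `p i ≠ p j` into one common price `c`, chosen so that
their total attraction `exp (u i - p i) + exp (u j - p j)` is unchanged, leaves the denominator of
the revenue unchanged and strictly raises its numerator: with weights proportional to the
attractions, `exp` of the mean price is below the mean of `exp (p k) = exp (u k) / exp (u k - p k)`,
which is `exp c`, by strict convexity of `exp`. The common price lies between `p i` and `p j`, so
when `u j ≤ u i` and `p i < p j` the new attractions stay between the old ones of `j` and `i`, and
the threshold condition survives. Hence an optimum has no such pair.
-/

open Real Finset

namespace ThresholdLuce

variable {ι : Type*}

noncomputable def revenue (u : ι → ℝ) (a0 : ℝ) (S : Finset ι) (p : ι → ℝ) : ℝ :=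
  (∑ k ∈ S, p k * exp (u k - p k)) / ((∑ k ∈ S, exp (u k - p k)) + a0)

theorem le_mul_of_forall_exists_between {S : Finset ι} {c : ℝ} {v w : ι → ℝ} (hc : 0 ≤ c)
    (hv : ∀ j ∈ S, ∀ i ∈ S, v i ≤ c * v j)
    (hupper : ∀ k ∈ S, ∃ a ∈ S, w k ≤ v a) (hlower : ∀ k ∈ S, ∃ b ∈ S, v b ≤ w k) :
    ∀ j ∈ S, ∀ i ∈ S, w i ≤ c * w j := by
  intro j hj i hi
  obtain ⟨a, ha, hwa⟩ := hupper i hi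
  obtain ⟨b, hb, hbw⟩ := hlower j hj
  calc w i ≤ v a := hwa
    _ ≤ c * v b := hv b hb a ha
    _ ≤ c * w j := mul_le_mul_of_nonneg_left hbw hc

section Pooling

variable (u p : ι → ℝ) (i j : ι)

noncomputable def pooledPrice : ℝ :=
  log ((exp (u i) + exp (u j)) / (exp (u i - p i) + exp (u j - p j)))

theorem exp_pooledPrice :
    exp (pooledPrice u p i j) = (exp (u i) + exp (u j)) / (exp (u i - p i) + exp (u j - p j)) :=
  exp_log (by positivity)

theorem exp_sub_pooledPrice_add :
    exp (u i - pooledPrice u p i j) + exp (u j - pooledPrice u p i j) =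
      exp (u i - p i) + exp (u j - p j) := by
  simp only [exp_sub (u i), exp_sub (u j), exp_pooledPrice]
  field_simp

variable {u p i j}

theorem exp_eq_exp_sub_mul_exp (k : ι) : exp (u k) = exp (u k - p k) * exp (p k) := by
  rw [← exp_add, sub_add_cancel]

theorem pooledPrice_mem_Icc (hp : p i ≤ p j) : pooledPrice u p i j ∈ Set.Icc (p i) (p j) := by
  have hexp : exp (p i) ≤ exp (p j) := exp_le_exp.mpr hp
  constructor
  · rw [← exp_le_exp, exp_pooledPrice, le_div_iff₀ (by positivity),
      exp_eq_exp_sub_mul_exp (u := u) (p := p) i,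
      exp_eq_exp_sub_mul_exp (u := u) (p := p) j]
    nlinarith [exp_pos (u j - p j)]
  · rw [← exp_le_exp, exp_pooledPrice, div_le_iff₀ (by positivity),
      exp_eq_exp_sub_mul_exp (u := u) (p := p) i,
      exp_eq_exp_sub_mul_exp (u := u) (p := p) j]
    nlinarith [exp_pos (u i - p i)]

theorem exp_sub_pooledPrice_mem_Icc {k : ι} (hjk : u j ≤ u k) (hki : u k ≤ u i) (hp : p i ≤ p j) :
    exp (u k - pooledPrice u p i j) ∈ Set.Icc (exp (u j - p j)) (exp (u i - p i)) := by
  obtain ⟨hci, hcj⟩ := pooledPrice_mem_Icc (u := u) hp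
  exact ⟨exp_le_exp.mpr (by linarith), exp_le_exp.mpr (by linarith)⟩

theorem mul_exp_sub_add_lt_pooledPrice (hp : p i ≠ p j) :
    p i * exp (u i - p i) + p j * exp (u j - p j) <
      pooledPrice u p i j * exp (u i - pooledPrice u p i j) +
        pooledPrice u p i j * exp (u j - pooledPrice u p i j) := by
  set vi := exp (u i - p i)
  set vj := exp (u j - p j)
  have hs : 0 < vi + vj := by positivity
  have hmean : vi / (vi + vj) * p i + vj / (vi + vj) * p j < pooledPrice u p i j := by
    rw [← exp_lt_exp, exp_pooledPrice, exp_eq_exp_sub_mul_exp (u := u) (p := p) i,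
      exp_eq_exp_sub_mul_exp (u := u) (p := p) j]
    calc exp (vi / (vi + vj) * p i + vj / (vi + vj) * p j)
        < vi / (vi + vj) * exp (p i) + vj / (vi + vj) * exp (p j) :=
          strictConvexOn_exp.2 (Set.mem_univ _) (Set.mem_univ _) hp (by positivity)
            (by positivity) (by field_simp)
      _ = (vi * exp (p i) + vj * exp (p j)) / (vi + vj) := by field_simp
  rw [← mul_add, exp_sub_pooledPrice_add]
  calc p i * vi + p j * vj = (vi / (vi + vj) * p i + vj / (vi + vj) * p j) * (vi + vj) := by
        field_simp
    _ < pooledPrice u p i j * (vi + vj) := mul_lt_mul_of_pos_right hmean hs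

end Pooling

section PooledPrices

variable [DecidableEq ι]

noncomputable def pooledPrices (u p : ι → ℝ) (i j : ι) : ι → ℝ :=
  ({i, j} : Finset ι).piecewise (fun _ => pooledPrice u p i j) p

theorem sum_pooledPrices_add {S : Finset ι} {i j : ι} (hi : i ∈ S) (hj : j ∈ S) (hij : i ≠ j)
    (F : ι → ℝ → ℝ) (u p : ι → ℝ) :
    ∑ k ∈ S, F k (pooledPrices u p i j k) + (F i (p i) + F j (p j)) =
      ∑ k ∈ S, F k (p k) + (F i (pooledPrice u p i j) + F j (pooledPrice u p i j)) := by
  have hsub : ({i, j} : Finset ι) ⊆ S := insert_subset hi (singleton_subset_iff.mpr hj)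
  rw [← sum_sdiff hsub, ← sum_sdiff (f := fun k => F k (p k)) hsub, sum_pair hij, sum_pair hij,
    sum_congr rfl fun k hk => by rw [pooledPrices, piecewise_eq_of_notMem _ _ _ (mem_sdiff.1 hk).2]]
  simp only [pooledPrices, piecewise_eq_of_mem _ _ _ (mem_insert_self i {j}),
    piecewise_eq_of_mem _ _ _ (mem_insert_of_mem (mem_singleton_self j))]
  ring

theorem revenue_lt_pooledPrices {u p : ι → ℝ} {a0 : ℝ} (ha0 : 0 < a0) {S : Finset ι} {i j : ι}
    (hi : i ∈ S) (hj : j ∈ S) (hp : p i ≠ p j) :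
    revenue u a0 S p < revenue u a0 S (pooledPrices u p i j) := by
  have hij : i ≠ j := fun h => hp (congrArg p h)
  have hden := sum_pooledPrices_add hi hj hij (fun k x => exp (u k - x)) u p
  have hnum := sum_pooledPrices_add hi hj hij (fun k x => x * exp (u k - x)) u p
  simp only [exp_sub_pooledPrice_add] at hden
  have hpos : 0 < (∑ k ∈ S, exp (u k - p k)) + a0 := by positivity
  unfold revenue
  rw [show ∑ k ∈ S, exp (u k - pooledPrices u p i j k) = ∑ k ∈ S, exp (u k - p k) by linarith]
  exact div_lt_div_of_pos_right (by linarith [mul_exp_sub_add_lt_pooledPrice (u := u) hp]) hpos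

theorem exp_sub_pooledPrices_le_mul {u p : ι → ℝ} {c : ℝ} (hc : 0 ≤ c) {S : Finset ι}
    {i j : ι} (hi : i ∈ S) (hj : j ∈ S) (hu : u j ≤ u i) (hp : p i ≤ p j)
    (hvalid : ∀ j ∈ S, ∀ i ∈ S, exp (u i - p i) ≤ c * exp (u j - p j)) :
    ∀ j' ∈ S, ∀ i' ∈ S,
      exp (u i' - pooledPrices u p i j i') ≤ c * exp (u j' - pooledPrices u p i j j') := by
  have hpooled : ∀ k ∈ ({i, j} : Finset ι),
      exp (u k - pooledPrices u p i j k) ∈ Set.Icc (exp (u j - p j)) (exp (u i - p i)) := by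
    intro k hk
    rw [pooledPrices, piecewise_eq_of_mem _ _ _ hk]
    rcases mem_insert.1 hk with rfl | hk
    · exact exp_sub_pooledPrice_mem_Icc hu le_rfl hp
    · rw [mem_singleton.1 hk]
      exact exp_sub_pooledPrice_mem_Icc le_rfl hu hp
  have hother : ∀ k ∉ ({i, j} : Finset ι), pooledPrices u p i j k = p k :=
    fun k hk => piecewise_eq_of_notMem _ _ _ hk
  refine le_mul_of_forall_exists_between hc hvalid (fun k hk => ?_) (fun k hk => ?_)
  · by_cases hpair : k ∈ ({i, j} : Finset ι)
    · exact ⟨i, hi, (hpooled k hpair).2⟩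
    · exact ⟨k, hk, by rw [hother k hpair]⟩
  · by_cases hpair : k ∈ ({i, j} : Finset ι)
    · exact ⟨j, hj, (hpooled k hpair).1⟩
    · exact ⟨k, hk, by rw [hother k hpair]⟩

end PooledPrices

end ThresholdLuce

/-- At an optimal solution of the joint assortment and pricing problem under the
Threshold Luce model, prices are nonincreasing in the product index (products indexed
by decreasing intrinsic utility), and offered products of equal intrinsic utility get
equal prices. -/
theorem optimal_prices_nonincreasing {n : ℕ}
    (u : Fin n → ℝ) (a0 t : ℝ) (ha0 : 0 < a0) (ht : 0 < t)
    (hsort : ∀ i j : Fin n, i ≤ j → u j ≤ u i) :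
    let R : Finset (Fin n) → (Fin n → ℝ) → ℝ := fun A q =>
      (∑ k ∈ A, q k * Real.exp (u k - q k)) /
        ((∑ k ∈ A, Real.exp (u k - q k)) + a0)
    let valid : Finset (Fin n) → (Fin n → ℝ) → Prop := fun A q =>
      ∀ j ∈ A, ∀ i ∈ A, Real.exp (u i - q i) ≤ (1 + t) * Real.exp (u j - q j)
    ∀ (Sstar : Finset (Fin n)) (pstar : Fin n → ℝ), valid Sstar pstar →
      (∀ S q, valid S q → R S q ≤ R Sstar pstar) →
      (∀ i ∈ Sstar, ∀ j ∈ Sstar, i ≤ j → pstar j ≤ pstar i) ∧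
      (∀ i ∈ Sstar, ∀ j ∈ Sstar, u i = u j → pstar i = pstar j) := by
  intro R valid S p hvalid hopt
  have hdecreasing : ∀ i ∈ S, ∀ j ∈ S, u j ≤ u i → p j ≤ p i := by
    intro i hi j hj hu
    by_contra! hlt
    have hpooled_valid :=
      ThresholdLuce.exp_sub_pooledPrices_le_mul (by linarith) hi hj hu hlt.le hvalid
    exact (ThresholdLuce.revenue_lt_pooledPrices ha0 hi hj hlt.ne).not_ge
      (hopt S _ hpooled_valid)
  exact ⟨fun i hi j hj hij => hdecreasing i hi j hj (hsort i j hij),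
    fun i hi j hj hu => le_antisymm (hdecreasing j hj i hi hu.le) (hdecreasing i hi j hj hu.ge)⟩
end

section
/- Define f : (0, ∞) → ℝ by f(p) = p·e^{u−p}/(e^{u−p} + a₀) for fixed u ∈ ℝ and a₀ > 0 (the single-product MNL revenue). Then f attains its maximum at p* = 1 + W(e^{u−1}/a₀), and the maximum value equals W(e^{u−1}/a₀), where W is the Lambert W function. -/
/-- The single-product MNL revenue `f(p) = p·e^{u−p}/(e^{u−p} + a₀)` on `(0,∞)`
attains its maximum at `p* = 1 + W(e^{u−1}/a₀)` and the maximum value is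
`W(e^{u−1}/a₀)`, where `W` is the Lambert W function. -/
theorem single_product_MNL_optimal_price (u a0 : ℝ) (ha0 : 0 < a0)
    (W : ℝ → ℝ) (hW : ∀ y, 0 ≤ y → W y * Real.exp (W y) = y)
    (hW0 : ∀ y, 0 ≤ y → 0 ≤ W y) :
    let f : ℝ → ℝ := fun p => p * Real.exp (u - p) / (Real.exp (u - p) + a0)
    let pstar := 1 + W (Real.exp (u - 1) / a0)
    f pstar = W (Real.exp (u - 1) / a0) ∧ ∀ p, 0 < p → f p ≤ f pstar := by
  intro f pstar
  set y : ℝ := Real.exp (u - 1) / a0 with hy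
  have hy0 : 0 < y := div_pos (Real.exp_pos _) ha0
  set w : ℝ := W y with hwdef
  have hw : w * Real.exp w = y := hW y hy0.le
  have hw0 : 0 ≤ w := hW0 y hy0.le
  have hwpos : 0 < w := by
    rcases hw0.lt_or_eq with h | h
    · exact h
    · exfalso
      rw [← h] at hw
      simp at hw
      rw [← hw] at hy0
      exact lt_irrefl _ hy0
  have key : a0 * w = Real.exp (u - 1 - w) := by
    have h1 : w * Real.exp w * a0 = Real.exp (u - 1) := by
      rw [hw, hy]
      field_simp
    have h2 : Real.exp (u - 1 - w) = Real.exp (u - 1) / Real.exp w := by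
      rw [Real.exp_sub]
    rw [h2, ← h1]
    field_simp [ (Real.exp_pos w).ne' ]
  have hfp : f pstar = w := by
    have hps : u - pstar = u - 1 - w := by simp [pstar]; ring
    have hden : Real.exp (u - 1 - w) + a0 = a0 * (w + 1) := by
      rw [← key]; ring
    show pstar * Real.exp (u - pstar) / (Real.exp (u - pstar) + a0) = w
    rw [hps, ← key, show pstar = 1 + w from rfl]
    have h1w : (0:ℝ) < 1 + w := by linarith
    field_simp
    ring
  refine ⟨hfp, fun p hp => ?_⟩
  rw [hfp]
  have hdenpos : 0 < Real.exp (u - p) + a0 := by positivity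
  rw [div_le_iff₀ hdenpos]
  rcases le_or_gt p w with hpw | hpw
  · have : p * Real.exp (u - p) ≤ w * Real.exp (u - p) :=
      mul_le_mul_of_nonneg_right hpw (Real.exp_pos _).le
    nlinarith [mul_nonneg hw0 ha0.le]
  · -- need (p - w) * exp (u - p) ≤ w * a0 = exp (u - 1 - w)
    have ht : (p - w) * Real.exp (1 + w - p) ≤ 1 := by
      have h1 : p - w ≤ Real.exp (p - w - 1) := by
        have := Real.add_one_le_exp (p - w - 1)
        linarith
      have h2 : (p - w) * Real.exp (1 + w - p) ≤
          Real.exp (p - w - 1) * Real.exp (1 + w - p) :=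
        mul_le_mul_of_nonneg_right h1 (Real.exp_pos _).le
      rwa [← Real.exp_add, show p - w - 1 + (1 + w - p) = 0 by ring,
        Real.exp_zero] at h2
    have hsplit : Real.exp (u - p) = Real.exp (u - 1 - w) * Real.exp (1 + w - p) := by
      rw [← Real.exp_add]; ring_nf
    have : (p - w) * Real.exp (u - p) ≤ Real.exp (u - 1 - w) := by
      calc (p - w) * Real.exp (u - p)
          = Real.exp (u - 1 - w) * ((p - w) * Real.exp (1 + w - p)) := by
            rw [hsplit]; ring
        _ ≤ Real.exp (u - 1 - w) * 1 :=
            mul_le_mul_of_nonneg_left ht (Real.exp_pos _).le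
        _ = Real.exp (u - 1 - w) := mul_one _
    rw [← key] at this
    nlinarith
end

section
/- Under the MNL with equal price sensitivities, the fixed-price policy p_i = 1 + R* with R* = W((Σ_{i∈X} e^{u_i − 1})/a₀) achieves revenue R*: substituting these prices into R(p) = (Σ_i p_i e^{u_i − p_i})/(Σ_i e^{u_i − p_i} + a₀) yields exactly R*. -/
/-!
At the uniform price `c = 1 + R` every attraction weight is `e^{uᵢ - 1} e^{-R}`, and the
Lambert equation `R e^R = (∑ᵢ e^{uᵢ - 1}) / a₀` turns their sum into `R a₀`.  With a uniform
price the revenue is `c · S / (S + a₀)` for `S` the total weight, here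
`(1 + R) R a₀ / (R a₀ + a₀) = R`.
-/

open Real Finset

variable {ι : Type*} [Fintype ι]

noncomputable def mnlRevenue (u p : ι → ℝ) (a₀ : ℝ) : ℝ :=
  (∑ i, p i * exp (u i - p i)) / ((∑ i, exp (u i - p i)) + a₀)

theorem mnlRevenue_const (u : ι → ℝ) (a₀ c : ℝ) :
    mnlRevenue u (fun _ => c) a₀ =
      c * (∑ i, exp (u i - c)) / ((∑ i, exp (u i - c)) + a₀) := by
  rw [mnlRevenue, mul_sum]

theorem sum_exp_sub_one_add_eq_of_mul_exp_eq {u : ι → ℝ} {a₀ R : ℝ} (ha₀ : a₀ ≠ 0)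
    (hR : R * exp R = (∑ i, exp (u i - 1)) / a₀) :
    ∑ i, exp (u i - (1 + R)) = R * a₀ :=
  calc ∑ i, exp (u i - (1 + R))
      = (∑ i, exp (u i - 1)) * exp (-R) := by
        rw [sum_mul]
        exact sum_congr rfl fun i _ => by rw [← exp_add]; ring_nf
    _ = R * exp R * a₀ * exp (-R) := by rw [hR, div_mul_cancel₀ _ ha₀]
    _ = R * a₀ := by rw [exp_neg]; field_simp

theorem mnlRevenue_eq_of_mul_exp_eq {u : ι → ℝ} {a₀ R : ℝ} (ha₀ : 0 < a₀)
    (hR : R * exp R = (∑ i, exp (u i - 1)) / a₀) :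
    mnlRevenue u (fun _ => 1 + R) a₀ = R := by
  have hR₀ : 0 ≤ R := by
    refine nonneg_of_mul_nonneg_left ?_ (exp_pos R)
    rw [hR]
    positivity
  rw [mnlRevenue_const, sum_exp_sub_one_add_eq_of_mul_exp_eq ha₀.ne' hR]
  field_simp
  ring

theorem fixed_price_achieves_lambert_revenue_general {n : ℕ} (u : Fin n → ℝ) (a0 : ℝ)
    (ha0 : 0 < a0) (W : ℝ → ℝ)
    (hW : ∀ y, 0 ≤ y → W y * Real.exp (W y) = y) :
    let Rstar := W ((∑ i, Real.exp (u i - 1)) / a0)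
    let p : Fin n → ℝ := fun _ => 1 + Rstar
    (∑ i, p i * Real.exp (u i - p i)) /
      ((∑ i, Real.exp (u i - p i)) + a0) = Rstar :=
  mnlRevenue_eq_of_mul_exp_eq ha0 (hW _ (by positivity))

/-- Under the MNL with equal price sensitivities, the fixed-price policy
`pᵢ = 1 + R*` with `R* = W((∑ᵢ e^{uᵢ−1})/a₀)` achieves revenue exactly `R*`. -/
theorem fixed_price_achieves_lambert_revenue {n : ℕ} (u : Fin n → ℝ) (a0 : ℝ)
    (ha0 : 0 < a0) (W : ℝ → ℝ)
    (hW : ∀ y, 0 ≤ y → W y * Real.exp (W y) = y)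
    (hW0 : ∀ y, 0 ≤ y → 0 ≤ W y) :
    let Rstar := W ((∑ i, Real.exp (u i - 1)) / a0)
    let p : Fin n → ℝ := fun _ => 1 + Rstar
    (∑ i, p i * Real.exp (u i - p i)) /
      ((∑ i, Real.exp (u i - p i)) + a0) = Rstar :=
  fixed_price_achieves_lambert_revenue_general u a0 ha0 W hW
end

section
/- Fixed-price policies can be strictly suboptimal under the Threshold Luce model: with 11 products where product 1 has utility u = 2 and products 2,…,11 each have utility u' = 1, outside option a₀ = 1 and threshold t = 1, (i) under any common price, product 1 dominates all others since e^{u−u'} = e > 2 = 1+t, so the best fixed-price revenue is W(e) = 1; (ii) the price vector with p₁ = 1.8 and p_k = 1.4 for k ≥ 2 creates no dominances (since e^{(2−1.8)−(1−1.4)} = e^{0.6} < 2) and yields revenue (1.8·e^{0.2} + 14·e^{−0.4})/(e^{0.2} + 10·e^{−0.4} + 1), which is strictly greater than 1. -/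
/-- Fixed-price policies can be strictly suboptimal under the Threshold Luce model:
with product 1 of utility 2 and ten products of utility 1, `a₀ = 1`, `t = 1`,
(i) under any common price product 1 dominates the others and the best fixed-price
revenue is `1` (attained at `p = 2`); (ii) prices `p₁ = 1.8`, `pₖ = 1.4` create no
dominance (`e^{0.6} < 2`) and yield revenue `(1.8·e^{0.2}+14·e^{−0.4})/(e^{0.2}+10·e^{−0.4}+1) > 1`. -/
theorem fixed_price_suboptimal_TLM :
    (∀ p : ℝ, Real.exp (2 - p) > (1 + 1) * Real.exp (1 - p)) ∧
    (∀ p : ℝ, p * Real.exp (2 - p) / (Real.exp (2 - p) + 1) ≤ 1) ∧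
    (2 : ℝ) * Real.exp (2 - 2) / (Real.exp (2 - 2) + 1) = 1 ∧
    Real.exp ((2 - 1.8) - (1 - 1.4)) < 1 + 1 ∧
    (1.8 * Real.exp (2 - 1.8) + 10 * 1.4 * Real.exp (1 - 1.4)) /
        (Real.exp (2 - 1.8) + 10 * Real.exp (1 - 1.4) + 1) > 1 := by
  refine ⟨?_, ?_, ?_, ?_, ?_⟩
  · intro p
    have h : (2 : ℝ) - p = 1 + (1 - p) := by ring
    rw [h, Real.exp_add]
    have he : (2 : ℝ) < Real.exp 1 := by
      have := Real.exp_one_gt_d9; linarith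
    have := Real.exp_pos (1 - p)
    nlinarith
  · intro p
    have hpos : (0 : ℝ) < Real.exp (2 - p) + 1 := by positivity
    rw [div_le_one hpos]
    have h1 : (p - 2) + 1 ≤ Real.exp (p - 2) := Real.add_one_le_exp _
    have h2 : Real.exp (p - 2) * Real.exp (2 - p) = 1 := by
      rw [← Real.exp_add]; norm_num
    have he := Real.exp_pos (2 - p)
    nlinarith
  · norm_num
  · have h1 : ((2 : ℝ) - 1.8) - (1 - 1.4) = 0.6 := by norm_num
    rw [h1]
    have h2 : (0.6 : ℝ) < Real.log 2 := by
      have := Real.log_two_gt_d9; linarith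
    calc Real.exp 0.6 < Real.exp (Real.log 2) := Real.exp_lt_exp.mpr h2
      _ = 2 := Real.exp_log (by norm_num)
      _ = 1 + 1 := by norm_num
  · have ha : (2 : ℝ) - 1.8 = 0.2 := by norm_num
    have hb : (1 : ℝ) - 1.4 = -0.4 := by norm_num
    rw [ha, hb]
    have h1 : (1.2 : ℝ) < Real.exp 0.2 := by
      have := Real.add_one_lt_exp (x := (0.2 : ℝ)) (by norm_num); linarith
    have h2 : (0.6 : ℝ) ≤ Real.exp (-0.4) := by
      have := Real.add_one_le_exp (-0.4 : ℝ); linarith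
    have hd : (0 : ℝ) < Real.exp 0.2 + 10 * Real.exp (-0.4) + 1 := by positivity
    rw [gt_iff_lt, lt_div_iff₀ hd]
    nlinarith
end
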